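/- Let (A_l)_{l≥0} be a real sequence and set u_k = A_{k+1} − A_k for all k. Fix j ≥ 0 and n ≥ 1, and suppose det((Δ²A)_{j+i+k})_{0≤i,k≤n−1} ≠ 0, where (Δ²A)_m = A_{m+2} − 2A_{m+1} + A_m. Then the linear system A_l = B + Σ_{k=1}^n ᾱ_k u_{k+l−1}, l = j, …, j+n, has a unique solution, and its component B equals the Shanks transform: B = det(A_{j+i+k})_{0≤i,k≤n} / det((Δ²A)_{j+i+k})_{0≤i,k≤n−1}. -/

import Mathlib

/-!
Write the system as `M *ᵥ (B, ᾱ) = (A_j, …, A_{j+n})`, where row `i` of `M` is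
`(1, ΔA_{j+i}, …, ΔA_{j+i+n-1})`. Subtracting from each row of `M` the previous one turns the
column of ones into `e₀` and the differences into second differences, so `det M` is the Hankel
determinant of `Δ²A`; `M` is therefore invertible. Subtracting from each column of the Hankel
matrix `(A_{j+i+k})` the previous one gives `M` with its first column replaced by the right-hand
side, so Cramer's rule yields the Shanks formula for `B`.
-/

open Matrix fwdDiff

namespace Matrix

variable {R : Type*} [CommRing R]

theorem det_mul_apply_eq_det_updateCol {ι : Type*} [Fintype ι] [DecidableEq ι]
    (M : Matrix ι ι R) (x : ι → R) (i : ι) : M.det * x i = (M.updateCol i (M *ᵥ x)).det := by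
  rw [← cramer_apply, cramer_eq_adjugate_mulVec, mulVec_mulVec, adjugate_mul, smul_mulVec,
    one_mulVec, Pi.smul_apply, smul_eq_mul]

theorem det_succ_of_col_zero_eq_zero {n : ℕ} (M : Matrix (Fin (n + 1)) (Fin (n + 1)) R)
    (h : ∀ i : Fin n, M i.succ 0 = 0) : M.det = M 0 0 * (M.submatrix Fin.succ Fin.succ).det := by
  simp [det_succ_column_zero M, Fin.sum_univ_succ, h]

def hankel (a : ℕ → R) (n : ℕ) : Matrix (Fin n) (Fin n) R := of fun i k => a (i + k)

/-- Row `i` holds the coefficients of `(B, ᾱ₁, …, ᾱₙ)` in the equation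
`a i = B + ∑ₖ ᾱₖ Δa (i + k - 1)`. -/
def shanksSystem (a : ℕ → R) (n : ℕ) : Matrix (Fin (n + 1)) (Fin (n + 1)) R :=
  of fun i => Fin.cons 1 fun k => Δ_[1] a (i + k)

theorem det_shanksSystem (a : ℕ → R) (n : ℕ) :
    (shanksSystem a n).det = (hankel (Δ_[1] (Δ_[1] a)) n).det := by
  set M := shanksSystem a n
  rw [det_eq_of_forall_row_eq_smul_add_pred (A := M) (B := of fun i => Fin.cases (M 0)
      (fun i' => M i'.succ - M i'.castSucc) i) (fun _ => 1) (fun _ => rfl)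
      (fun i k => by simp), det_succ_of_col_zero_eq_zero _ (fun i => by simp [M, shanksSystem])]
  simp only [M, shanksSystem, of_apply, Fin.cases_zero, Fin.cons_zero, one_mul]
  congr 1
  ext i k
  simp [hankel, fwdDiff, Fin.val_succ, add_right_comm]

theorem det_shanksSystem_updateCol_zero (a : ℕ → R) (n : ℕ) :
    ((shanksSystem a n).updateCol 0 fun i => a i).det = (hankel a (n + 1)).det := by
  refine (det_eq_of_forall_col_eq_smul_add_pred (fun _ => 1) (fun i => ?_) fun i k => ?_).symm
  · simp [hankel]
  · simp [hankel, shanksSystem, fwdDiff, Fin.val_succ, add_assoc]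

variable {K : Type*} [Field K] {a : ℕ → K} {n : ℕ}

theorem existsUnique_shanksSystem_mulVec_eq (h : (hankel (Δ_[1] (Δ_[1] a)) n).det ≠ 0) :
    ∃! x, shanksSystem a n *ᵥ x = fun i : Fin (n + 1) => a i := by
  have hM : IsUnit (shanksSystem a n) := by
    rw [isUnit_iff_isUnit_det, det_shanksSystem]
    exact h.isUnit
  exact Function.Bijective.existsUnique
    ⟨mulVec_injective_iff_isUnit.2 hM, mulVec_surjective_iff_isUnit.2 hM⟩ _

theorem eq_det_hankel_div_of_shanksSystem_mulVec_eq (h : (hankel (Δ_[1] (Δ_[1] a)) n).det ≠ 0)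
    {x : Fin (n + 1) → K} (hx : shanksSystem a n *ᵥ x = fun i : Fin (n + 1) => a i) :
    x 0 = (hankel a (n + 1)).det / (hankel (Δ_[1] (Δ_[1] a)) n).det := by
  rw [eq_div_iff h, mul_comm, ← det_shanksSystem_updateCol_zero, ← hx, ← det_shanksSystem,
    det_mul_apply_eq_det_updateCol]

end Matrix

theorem stmt_15_general (A : ℕ → ℝ) (j n : ℕ)
    (hD : Matrix.det (Matrix.of fun i k : Fin n =>
        A (j + i + k + 2) - 2 * A (j + i + k + 1) + A (j + i + k)) ≠ 0) :
    (∃! p : ℝ × (Fin n → ℝ),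
      ∀ i : Fin (n + 1),
        A (j + i) = p.1 + ∑ k : Fin n, p.2 k * (A (j + i + k + 1) - A (j + i + k))) ∧
    (∀ p : ℝ × (Fin n → ℝ),
      (∀ i : Fin (n + 1),
        A (j + i) = p.1 + ∑ k : Fin n, p.2 k * (A (j + i + k + 1) - A (j + i + k))) →
      p.1 = Matrix.det (Matrix.of fun i k : Fin (n + 1) => A (j + i + k)) /
        Matrix.det (Matrix.of fun i k : Fin n =>
          A (j + i + k + 2) - 2 * A (j + i + k + 1) + A (j + i + k))) := by
  set a : ℕ → ℝ := fun m => A (j + m)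
  have hΔΔ : (of fun i k : Fin n => A (j + i + k + 2) - 2 * A (j + i + k + 1) + A (j + i + k)) =
      hankel (Δ_[1] (Δ_[1] a)) n := by
    ext i k
    simp only [hankel, of_apply, fwdDiff, a]
    ring_nf
  have hA : (of fun i k : Fin (n + 1) => A (j + i + k)) = hankel a (n + 1) := by
    ext i k
    simp [hankel, a, add_assoc]
  have hsys : ∀ p : ℝ × (Fin n → ℝ), (∀ i : Fin (n + 1),
      A (j + i) = p.1 + ∑ k : Fin n, p.2 k * (A (j + i + k + 1) - A (j + i + k))) ↔
      shanksSystem a n *ᵥ Fin.cons p.1 p.2 = fun i : Fin (n + 1) => a i := by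
    intro p
    rw [funext_iff]
    refine forall_congr' fun i => ?_
    simp [mulVec, dotProduct, Fin.sum_univ_succ, shanksSystem, fwdDiff, a, add_assoc, mul_comm,
      eq_comm]
  rw [hΔΔ] at hD
  rw [hΔΔ, hA]
  exact ⟨(Fin.consEquiv _).existsUnique_congr hsys |>.2 (existsUnique_shanksSystem_mulVec_eq hD),
    fun p hp => eq_det_hankel_div_of_shanksSystem_mulVec_eq hD ((hsys p).1 hp)⟩

theorem stmt_15 (A : ℕ → ℝ) (j n : ℕ) (hn : 1 ≤ n)
    (hD : Matrix.det (Matrix.of fun i k : Fin n =>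
        A (j + i + k + 2) - 2 * A (j + i + k + 1) + A (j + i + k)) ≠ 0) :
    (∃! p : ℝ × (Fin n → ℝ),
      ∀ i : Fin (n + 1),
        A (j + i) = p.1 + ∑ k : Fin n, p.2 k * (A (j + i + k + 1) - A (j + i + k))) ∧
    (∀ p : ℝ × (Fin n → ℝ),
      (∀ i : Fin (n + 1),
        A (j + i) = p.1 + ∑ k : Fin n, p.2 k * (A (j + i + k + 1) - A (j + i + k))) →
      p.1 = Matrix.det (Matrix.of fun i k : Fin (n + 1) => A (j + i + k)) /
        Matrix.det (Matrix.of fun i k : Fin n =>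
          A (j + i + k + 2) - 2 * A (j + i + k + 1) + A (j + i + k))) :=
  stmt_15_general A j n hD
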